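/- arXiv:2505.14836 — 2 statements merged into one kernel-verified Lean document; each statement's English description precedes it below -/
import Mathlib

section
/- Let Λ' be a lattice with skew-symmetric form ω and let Γ ⊆ Λ' be generated by vectors g₁,…,g_m which are part of a basis of Λ' (equivalently, linearly independent with torsion-free quotient). If each gᵢ ∈ ker ω, then the left ideal of W_{Λ'} generated by {X^{gᵢ} − cᵢ} (for scalars cᵢ ∈ C(q^{1/2})^×) is a two-sided ideal, and the quotient algebra is the quantum torus W_{Λ'/Γ}. -/
/-!
Since every `g i` lies in the kernel of `ω`, the basis vectors `X^γ`, `γ ∈ Γ`, multiply without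
twist. The values `c i` define a character of `Γ` (free abelian on the `g i`), which extends to a
character `χ` of `Λ'` because `Λ'/Γ` is free, so that `Γ` is a direct summand. Then
`X^v ↦ χ v • X^[v]` is a surjective algebra map `W_{Λ'} → W_{Λ'/Γ}` killing every `X^{g i} - c i`.
Conversely, modulo the left ideal, `X^v ≡ χ (v - u) • X^u` whenever `[u] = [v]`; reducing to fixed
representatives shows that the kernel is exactly the left ideal, which is therefore two-sided.
-/

/-- `qh` models `q^{1/2}`. -/
noncomputable def qh : RatFunc ℂ := RatFunc.X

open Set

theorem forall_mem_closure_eq_zero_of_forall_mem {Λ A : Type*} [AddCommGroup Λ] [AddCommGroup A]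
    (ω : Λ → Λ → A) (hadd_l : ∀ u v w, ω (u + v) w = ω u w + ω v w)
    (hadd_r : ∀ u v w, ω u (v + w) = ω u v + ω u w) {S : Set Λ}
    (hS : ∀ s ∈ S, ∀ v, ω s v = 0 ∧ ω v s = 0) :
    ∀ γ ∈ AddSubgroup.closure S, ∀ v, ω γ v = 0 ∧ ω v γ = 0 := by
  let ω₂ : Λ →+ Λ →+ A :=
    AddMonoidHom.mk' (fun u ↦ AddMonoidHom.mk' (ω u) (hadd_r u)) fun u v ↦
      AddMonoidHom.ext (hadd_l u v)
  have hle : AddSubgroup.closure S ≤ ω₂.ker ⊓ ω₂.flip.ker :=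
    (AddSubgroup.closure_le _).2 fun s hs ↦
      ⟨AddMonoidHom.ext fun v ↦ (hS s hs v).1, AddMonoidHom.ext fun v ↦ (hS s hs v).2⟩
  intro γ hγ v
  exact ⟨DFunLike.congr_fun (hle hγ).1 v, DFunLike.congr_fun (hle hγ).2 v⟩

theorem LinearIndependent.exists_addMonoidHom_apply_eq {M N ι : Type*} [AddCommGroup M]
    [AddCommGroup N] {g : ι → M} (hg : LinearIndependent ℤ g)
    [Module.Projective ℤ (M ⧸ AddSubgroup.closure (range g))] (n : ι → N) :
    ∃ F : M →+ N, ∀ i, F (g i) = n i := by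
  set Γ := AddSubgroup.closure (range g)
  let π := (QuotientAddGroup.mk' Γ).toIntLinearMap
  obtain ⟨s, hs⟩ :=
    Module.projective_lifting_property π LinearMap.id (QuotientAddGroup.mk'_surjective Γ)
  have hmem : ∀ v, v - s (π v) ∈ Submodule.span ℤ (range g) := fun v ↦ by
    rw [← Submodule.mem_toAddSubgroup, Submodule.span_int_eq_addSubgroupClosure,
      ← QuotientAddGroup.eq_zero_iff]
    exact sub_eq_zero.2 (LinearMap.congr_fun hs (π v)).symm
  let r : M →ₗ[ℤ] Submodule.span ℤ (range g) :=
    LinearMap.codRestrict _ (LinearMap.id - s ∘ₗ π) hmem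
  refine ⟨(Finsupp.linearCombination ℤ n ∘ₗ hg.repr ∘ₗ r).toAddMonoidHom, fun i ↦ ?_⟩
  have hgi : π (g i) = 0 := (QuotientAddGroup.eq_zero_iff _).2 (AddSubgroup.subset_closure ⟨i, rfl⟩)
  have : hg.repr (r (g i)) = Finsupp.single i 1 :=
    hg.repr_eq_single i _ (by simp [r, hgi])
  simp [this]

theorem LinearIndependent.exists_addChar_apply_eq {M K ι : Type*} [AddCommGroup M] [Field K]
    {g : ι → M} (hg : LinearIndependent ℤ g)
    [Module.Projective ℤ (M ⧸ AddSubgroup.closure (range g))] (c : ι → K) (hc : ∀ i, c i ≠ 0) :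
    ∃ χ : AddChar M K, ∀ i, χ (g i) = c i := by
  obtain ⟨F, hF⟩ :=
    hg.exists_addMonoidHom_apply_eq fun i ↦ Additive.ofMul (Units.mk0 (c i) (hc i))
  exact ⟨(Units.coeHom K).compAddChar (AddChar.toAddMonoidHomEquiv.symm F), fun i ↦ by simp [hF]⟩

theorem LinearMap.map_mul_of_map_mul_basis {R A B ι : Type*} [CommSemiring R] [Semiring A]
    [Semiring B] [Algebra R A] [Algebra R B] (f : A →ₗ[R] B) (b : Module.Basis ι R A)
    (h : ∀ i j, f (b i * b j) = f (b i) * f (b j)) (x y : A) : f (x * y) = f x * f y :=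
  LinearMap.congr_fun₂ (LinearMap.ext_basis (B := (LinearMap.mul R A).compr₂ f)
    (B' := (LinearMap.mul R B).compl₁₂ f f) b b h) x y

namespace TwistedGroupAlgebra

variable {K Λ Λ' W W' ι : Type*} [CommRing K] [AddCommGroup Λ] [AddCommGroup Λ']
  [Ring W] [Algebra K W] [Ring W'] [Algebra K W']
  {B : Module.Basis Λ K W} {B' : Module.Basis Λ' K W'} {σ : Λ → Λ → K} {σ' : Λ' → Λ' → K}
  {χ : AddChar Λ K} {π : Λ →+ Λ'}

theorem exists_algHom_basis_eq_smul (hone : B 0 = 1) (hmul : ∀ v w, B v * B w = σ v w • B (v + w))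
    (hone' : B' 0 = 1) (hmul' : ∀ v w, B' v * B' w = σ' v w • B' (v + w))
    (hσ : ∀ v w, σ' (π v) (π w) = σ v w) :
    ∃ φ : W →ₐ[K] W', ∀ v, φ (B v) = χ v • B' (π v) := by
  let f := B.constr K fun v ↦ χ v • B' (π v)
  have hf : ∀ v, f (B v) = χ v • B' (π v) := B.constr_basis K _
  have hf_one : f 1 = 1 := by rw [← hone, hf, π.map_zero, AddChar.map_zero_eq_one, one_smul, hone']
  have hf_mul : ∀ v w, f (B v * B w) = f (B v) * f (B w) := fun v w ↦ by
    rw [hmul, map_smul, hf, hf, hf, smul_mul_smul_comm, hmul', hσ, AddChar.map_add_eq_mul,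
      map_add, smul_smul, smul_smul, mul_comm]
  exact ⟨AlgHom.ofLinearMap f hf_one (f.map_mul_of_map_mul_basis B hf_mul), hf⟩

theorem surjective_of_basis_eq_smul (hπ : Function.Surjective π) {φ : W →ₐ[K] W'}
    (hφ : ∀ v, φ (B v) = χ v • B' (π v)) : Function.Surjective φ := by
  change Function.Surjective φ.toLinearMap
  rw [← LinearMap.range_eq_top, eq_top_iff, ← B'.span_eq, Submodule.span_le]
  rintro _ ⟨u, rfl⟩
  obtain ⟨v, rfl⟩ := hπ u
  refine ⟨χ (-v) • B v, ?_⟩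
  rw [AlgHom.toLinearMap_apply, map_smul, hφ, smul_smul, ← AddChar.map_add_eq_mul, neg_add_cancel,
    AddChar.map_zero_eq_one, one_smul]

theorem basis_sub_smul_one_mem_of_mem_closure (hone : B 0 = 1)
    (hmul : ∀ v w, B v * B w = σ v w • B (v + w)) {g : ι → Λ}
    (hΓ : ∀ γ ∈ AddSubgroup.closure (range g), ∀ v, σ γ v = 1) {I : Ideal W}
    (hI : ∀ i, B (g i) - χ (g i) • 1 ∈ I) :
    ∀ γ ∈ AddSubgroup.closure (range g), B γ - χ γ • 1 ∈ I := by
  intro γ hγ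
  induction hγ using AddSubgroup.closure_induction with
  | mem _ hx => obtain ⟨i, rfl⟩ := hx; exact hI i
  | zero => rw [hone, AddChar.map_zero_eq_one, one_smul, sub_self]; exact I.zero_mem
  | add x y hx _ ihx ihy =>
    have : B (x + y) - χ (x + y) • 1 = B x * (B y - χ y • 1) + χ y • (B x - χ x • 1) := by
      rw [← one_smul K (B (x + y)), ← hΓ x hx y, ← hmul, AddChar.map_add_eq_mul, mul_sub,
        smul_sub, Algebra.mul_smul_comm, mul_one, smul_smul, mul_comm (χ y)]
      abel
    rw [this]
    exact I.add_mem (I.mul_mem_left _ ihy) (I.smul_of_tower_mem _ ihx)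
  | neg x hx ih =>
    have hinv : B (-x) * B x = 1 := by
      rw [hmul, hΓ _ (neg_mem hx), one_smul, neg_add_cancel, hone]
    have hχ : χ (-x) * χ x = 1 := by
      rw [← AddChar.map_add_eq_mul, neg_add_cancel, AddChar.map_zero_eq_one]
    have : B (-x) - χ (-x) • 1 = -χ (-x) • (B (-x) * (B x - χ x • 1)) := by
      rw [mul_sub, hinv, Algebra.mul_smul_comm, mul_one, smul_sub, smul_smul, neg_mul, hχ]
      simp only [neg_smul, one_smul]
      abel
    rw [this]
    exact I.smul_of_tower_mem _ (I.mul_mem_left _ ih)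

theorem eq_zero_iff_mem_span (hone : B 0 = 1) (hmul : ∀ v w, B v * B w = σ v w • B (v + w))
    (hone' : B' 0 = 1) {g : ι → Λ}
    (hΓ : ∀ γ ∈ AddSubgroup.closure (range g), ∀ v, σ γ v = 1 ∧ σ v γ = 1)
    (hπ : Function.Surjective π) (hker : π.ker = AddSubgroup.closure (range g))
    {φ : W →ₐ[K] W'} (hφ : ∀ v, φ (B v) = χ v • B' (π v)) (x : W) :
    φ x = 0 ↔ x ∈ Ideal.span {x | ∃ i, x = B (g i) - χ (g i) • 1} := by
  set I := Ideal.span {x : W | ∃ i, x = B (g i) - χ (g i) • 1}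
  have hgen : ∀ γ ∈ AddSubgroup.closure (range g), B γ - χ γ • 1 ∈ I :=
    basis_sub_smul_one_mem_of_mem_closure hone hmul (fun γ hγ v ↦ (hΓ γ hγ v).1)
      fun i ↦ Ideal.subset_span ⟨i, rfl⟩
  refine ⟨fun hx ↦ ?_, fun hx ↦ ?_⟩
  · let ℓ := Function.surjInv hπ
    let ψ : W' →ₗ[K] W := B'.constr K fun u ↦ χ (-ℓ u) • B (ℓ u)
    suffices h : ⊤ ≤ (I.restrictScalars K).comap (LinearMap.id - ψ ∘ₗ φ.toLinearMap) by
      simpa [hx] using h (Submodule.mem_top (x := x))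
    rw [← B.span_eq, Submodule.span_le]
    rintro _ ⟨v, rfl⟩
    set u := ℓ (π v)
    have hγ : v - u ∈ AddSubgroup.closure (range g) := by
      rw [← hker, AddMonoidHom.mem_ker, map_sub, Function.surjInv_eq hπ, sub_self]
    have hB : B u * B (v - u) = B v := by
      rw [hmul, (hΓ _ hγ u).2, one_smul, add_sub_cancel]
    have hχ : χ v * χ (-u) = χ (v - u) := by rw [← AddChar.map_add_eq_mul, sub_eq_add_neg]
    have : B v - ψ (φ (B v)) = B u * (B (v - u) - χ (v - u) • 1) := by
      rw [hφ, map_smul, B'.constr_basis, smul_smul, hχ, mul_sub, hB, Algebra.mul_smul_comm, mul_one]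
    simpa [this] using I.mul_mem_left (B u) (hgen _ hγ)
  · refine (Ideal.span_le.2 ?_ : I ≤ RingHom.ker φ) hx
    rintro _ ⟨i, rfl⟩
    have hπg : π (g i) = 0 := by
      rw [← AddMonoidHom.mem_ker, hker]; exact AddSubgroup.subset_closure ⟨i, rfl⟩
    rw [SetLike.mem_coe, RingHom.mem_ker, map_sub, hφ, hπg, hone', map_smul,
      map_one, sub_self]

end TwistedGroupAlgebra

theorem stmt17_general (Λ : Type*) [AddCommGroup Λ] [Module.Finite ℤ Λ]
    (ω : Λ → Λ → ℤ)
    (hadd_l : ∀ u v w : Λ, ω (u + v) w = ω u w + ω v w)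
    (hadd_r : ∀ u v w : Λ, ω u (v + w) = ω u v + ω u w)
    {m : ℕ} (g : Fin m → Λ) (hind : LinearIndependent ℤ g)
    (htf : ∀ (k : ℤ) (x : Λ ⧸ AddSubgroup.closure (Set.range g)),
      k ≠ 0 → k • x = 0 → x = 0)
    (hker : ∀ (i : Fin m) (v : Λ), ω (g i) v = 0 ∧ ω v (g i) = 0)
    (c : Fin m → RatFunc ℂ) (hc : ∀ i, c i ≠ 0)
    {W : Type*} [Ring W] [Algebra (RatFunc ℂ) W]
    (B : Module.Basis Λ (RatFunc ℂ) W) (hone : B 0 = 1)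
    (hmul : ∀ v w : Λ, B v * B w = (qh ^ (ω v w)) • B (v + w))
    (ω' : (Λ ⧸ AddSubgroup.closure (Set.range g)) →
          (Λ ⧸ AddSubgroup.closure (Set.range g)) → ℤ)
    (hω' : ∀ v w : Λ, ω' (QuotientAddGroup.mk v) (QuotientAddGroup.mk w) = ω v w)
    {W' : Type*} [Ring W'] [Algebra (RatFunc ℂ) W']
    (B' : Module.Basis (Λ ⧸ AddSubgroup.closure (Set.range g)) (RatFunc ℂ) W')
    (hone' : B' 0 = 1)
    (hmul' : ∀ v w, B' v * B' w = (qh ^ (ω' v w)) • B' (v + w)) :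
    (∀ x ∈ Ideal.span {x : W | ∃ i, x = B (g i) - c i • (1 : W)}, ∀ a : W,
        x * a ∈ Ideal.span {x : W | ∃ i, x = B (g i) - c i • (1 : W)}) ∧
    (∃ φ : W →ₐ[RatFunc ℂ] W', Function.Surjective φ ∧
      ∀ x : W, φ x = 0 ↔ x ∈ Ideal.span {x : W | ∃ i, x = B (g i) - c i • (1 : W)}) := by
  set Γ := AddSubgroup.closure (Set.range g)
  have hπ := QuotientAddGroup.mk'_surjective Γ
  have : Module.Finite ℤ (Λ ⧸ Γ) := .of_surjective (QuotientAddGroup.mk' Γ).toIntLinearMap hπ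
  have : Module.IsTorsionFree ℤ (Λ ⧸ Γ) :=
    .of_smul_eq_zero fun k x hkx ↦ or_iff_not_imp_left.2 fun hk ↦ htf k x hk hkx
  have : Module.Free ℤ (Λ ⧸ Γ) := Module.free_of_finite_type_torsion_free'
  obtain ⟨χ, hχ⟩ := hind.exists_addChar_apply_eq c hc
  have hΓ : ∀ γ ∈ Γ, ∀ v, qh ^ ω γ v = 1 ∧ qh ^ ω v γ = 1 := fun γ hγ v ↦ by
    obtain ⟨h₁, h₂⟩ := forall_mem_closure_eq_zero_of_forall_mem ω hadd_l hadd_r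
      (by rintro _ ⟨i, rfl⟩; exact hker i) γ hγ v
    simp [h₁, h₂]
  obtain ⟨φ, hφ⟩ := TwistedGroupAlgebra.exists_algHom_basis_eq_smul (χ := χ)
    (π := QuotientAddGroup.mk' Γ) hone hmul hone' hmul' fun v w ↦ congrArg (qh ^ ·) (hω' v w)
  have hφ_ker (x : W) : φ x = 0 ↔ x ∈ Ideal.span {x : W | ∃ i, x = B (g i) - c i • (1 : W)} := by
    simpa only [hχ] using TwistedGroupAlgebra.eq_zero_iff_mem_span hone hmul hone' hΓ hπ
      (QuotientAddGroup.ker_mk' Γ) hφ x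
  refine ⟨fun x hx a ↦ (hφ_ker _).1 ?_, φ, TwistedGroupAlgebra.surjective_of_basis_eq_smul hπ hφ,
    hφ_ker⟩
  rw [map_mul, (hφ_ker x).2 hx, zero_mul]

/-- Let `Γ ⊆ Λ'` be generated by `g₁, …, g_m`, linearly independent with torsion-free
quotient, each lying in the kernel of the skew form `ω`.  Then the left ideal of the
quantum torus `W_{Λ'}` generated by `{X^{gᵢ} − cᵢ}` (for nonzero scalars `cᵢ`) is a
two-sided ideal, and the quotient algebra is the quantum torus `W_{Λ'/Γ}`: there is a
surjective algebra map onto `W_{Λ'/Γ}` whose kernel is exactly that ideal. -/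
theorem stmt17 (Λ : Type*) [AddCommGroup Λ] [Module.Free ℤ Λ] [Module.Finite ℤ Λ]
    (ω : Λ → Λ → ℤ)
    (hadd_l : ∀ u v w : Λ, ω (u + v) w = ω u w + ω v w)
    (hadd_r : ∀ u v w : Λ, ω u (v + w) = ω u v + ω u w)
    (hskew : ∀ v : Λ, ω v v = 0)
    {m : ℕ} (g : Fin m → Λ) (hind : LinearIndependent ℤ g)
    (htf : ∀ (k : ℤ) (x : Λ ⧸ AddSubgroup.closure (Set.range g)),
      k ≠ 0 → k • x = 0 → x = 0)
    (hker : ∀ (i : Fin m) (v : Λ), ω (g i) v = 0 ∧ ω v (g i) = 0)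
    (c : Fin m → RatFunc ℂ) (hc : ∀ i, c i ≠ 0)
    {W : Type*} [Ring W] [Algebra (RatFunc ℂ) W]
    (B : Module.Basis Λ (RatFunc ℂ) W) (hone : B 0 = 1)
    (hmul : ∀ v w : Λ, B v * B w = (qh ^ (ω v w)) • B (v + w))
    (ω' : (Λ ⧸ AddSubgroup.closure (Set.range g)) →
          (Λ ⧸ AddSubgroup.closure (Set.range g)) → ℤ)
    (hω' : ∀ v w : Λ, ω' (QuotientAddGroup.mk v) (QuotientAddGroup.mk w) = ω v w)
    {W' : Type*} [Ring W'] [Algebra (RatFunc ℂ) W']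
    (B' : Module.Basis (Λ ⧸ AddSubgroup.closure (Set.range g)) (RatFunc ℂ) W')
    (hone' : B' 0 = 1)
    (hmul' : ∀ v w, B' v * B' w = (qh ^ (ω' v w)) • B' (v + w)) :
    (∀ x ∈ Ideal.span {x : W | ∃ i, x = B (g i) - c i • (1 : W)}, ∀ a : W,
        x * a ∈ Ideal.span {x : W | ∃ i, x = B (g i) - c i • (1 : W)}) ∧
    (∃ φ : W →ₐ[RatFunc ℂ] W', Function.Surjective φ ∧
      ∀ x : W, φ x = 0 ↔ x ∈ Ideal.span {x : W | ∃ i, x = B (g i) - c i • (1 : W)}) :=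
  stmt17_general Λ ω hadd_l hadd_r g hind htf hker c hc B hone hmul ω' hω' B' hone' hmul'
end

section
/- In the quantum torus over C(q^{1/2}) with invertible generators M, L (LM = qML), the element A_q = q^{22}M^8L^3 − q^{17}M^8L − q^{16}M^6L^3 + (q^{37/2} − q^{29/2})M^6L^2 + q^{15/2}M^4L^4 + q^{15}M^6L − (q^{12}+q^{10})M^4L^3 + (q^{17}+q^{15})M^4L − q^4M^2L^3 − q^{35/2}M^4 + (−q^{25/2}+q^{17/2})M^2L^2 + q^{15}M^2L + L^3 − q^{15}L, when specialized at q^{1/2} = −1 (so q = 1), becomes divisible in C[M^{±1}, L^{±1}] by the classical figure-eight A-polynomial factor M^4 + L(−1 + M^2 + 2M^4 + M^6 − M^8) + L^2M^4. -/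
/-- `M` in the commutative Laurent ring `ℂ[M^{±1}, L^{±1}] = ℂ[ℤ × ℤ]`. -/
noncomputable def M19 : AddMonoidAlgebra ℂ (ℤ × ℤ) := AddMonoidAlgebra.single (1, 0) 1

/-- `L` in the commutative Laurent ring `ℂ[M^{±1}, L^{±1}] = ℂ[ℤ × ℤ]`. -/
noncomputable def L19 : AddMonoidAlgebra ℂ (ℤ × ℤ) := AddMonoidAlgebra.single (0, 1) 1

/-! At `q^{1/2} = −1` the coefficients of `A_q` collapse to `0, ±1, ±2`, and the resulting
Laurent polynomial is `A(M, L) · (1 − L²)`: a polynomial identity valid in every commutative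
ring, so the cofactor `1 − L²` witnesses the divisibility. -/

theorem figureEight_specialized_eq_mul {R : Type*} [CommRing R] (M L : R) :
    M ^ 8 * L ^ 3 - M ^ 8 * L - M ^ 6 * L ^ 3 - M ^ 4 * L ^ 4 + M ^ 6 * L - 2 * (M ^ 4 * L ^ 3)
      + 2 * (M ^ 4 * L) - M ^ 2 * L ^ 3 + M ^ 4 + M ^ 2 * L + L ^ 3 - L
      = (M ^ 4 + L * (-1 + M ^ 2 + 2 * M ^ 4 + M ^ 6 - M ^ 8) + L ^ 2 * M ^ 4) * (1 - L ^ 2) := by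
  ring

/-- Specializing the quantum element `A_q` at `q^{1/2} = −1` (each `q^{k/2}` becomes
`(−1)^k`), the result is divisible in `ℂ[M^{±1}, L^{±1}]` by the classical
figure-eight A-polynomial factor `M^4 + L(−1 + M² + 2M⁴ + M⁶ − M⁸) + L²M⁴`. -/
theorem stmt19 :
    ∃ Cq : AddMonoidAlgebra ℂ (ℤ × ℤ),
      ((-1 : ℂ) ^ 44) • (M19 ^ 8 * L19 ^ 3) - ((-1 : ℂ) ^ 34) • (M19 ^ 8 * L19)
        - ((-1 : ℂ) ^ 32) • (M19 ^ 6 * L19 ^ 3)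
        + (((-1 : ℂ) ^ 37) - ((-1 : ℂ) ^ 29)) • (M19 ^ 6 * L19 ^ 2)
        + ((-1 : ℂ) ^ 15) • (M19 ^ 4 * L19 ^ 4)
        + ((-1 : ℂ) ^ 30) • (M19 ^ 6 * L19)
        - (((-1 : ℂ) ^ 24) + ((-1 : ℂ) ^ 20)) • (M19 ^ 4 * L19 ^ 3)
        + (((-1 : ℂ) ^ 34) + ((-1 : ℂ) ^ 30)) • (M19 ^ 4 * L19)
        - ((-1 : ℂ) ^ 8) • (M19 ^ 2 * L19 ^ 3)
        - ((-1 : ℂ) ^ 35) • (M19 ^ 4)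
        + ((-((-1 : ℂ) ^ 25)) + ((-1 : ℂ) ^ 17)) • (M19 ^ 2 * L19 ^ 2)
        + ((-1 : ℂ) ^ 30) • (M19 ^ 2 * L19)
        + L19 ^ 3 - ((-1 : ℂ) ^ 30) • L19
      = (M19 ^ 4 + L19 * (-1 + M19 ^ 2 + 2 * M19 ^ 4 + M19 ^ 6 - M19 ^ 8)
          + L19 ^ 2 * M19 ^ 4) * Cq := by
  refine ⟨1 - L19 ^ 2, ?_⟩
  rw [← figureEight_specialized_eq_mul]
  norm_num [two_smul]
  ring
end
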